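/- For any ε > 0, q ≥ 1, and r ≥ 1, there exist matrices A, B, Z with Z ≠ 0, rank(A) = r, and B = A + Z such that, with Â the best rank-r approximation of B, ‖Â − A‖_q > ((2^q + 1)^{1/q} − ε)·‖Z_{max(r)}‖_q. (E.g., take A = diag(2I_r, 0, 0), Z = diag(−(1+η)I_r, I_r, 0) with small η > 0.) -/

import Mathlib

open scoped ENNReal
open Matrix

/-- The `i`-th largest singular value (0-indexed) of a real matrix. -/
noncomputable def sval {m n : ℕ} (A : Matrix (Fin m) (Fin n) ℝ) : ℕ → ℝ := fun i =>
  if h : i < n then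
    Real.sqrt ((show (Aᵀ * A).IsHermitian by simpa using Matrix.isHermitian_conjTranspose_mul_self A).eigenvalues
      (Tuple.sort ((show (Aᵀ * A).IsHermitian by simpa using Matrix.isHermitian_conjTranspose_mul_self A).eigenvalues) ⟨n - 1 - i, by omega⟩))
  else 0

/-- Truncated Schatten-q norm (ℓ_q norm of the top `r` singular values), q ∈ [1,∞]. -/
noncomputable def schattenTE {m n : ℕ} (q : ℝ≥0∞) (r : ℕ) (A : Matrix (Fin m) (Fin n) ℝ) : ℝ :=
  if q = ∞ then sval A 0
  else (∑ i ∈ Finset.range r, sval A i ^ q.toReal) ^ (1 / q.toReal)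

/-- Schatten-q norm, q ∈ [1,∞]. -/
noncomputable def schattenE {m n : ℕ} (q : ℝ≥0∞) (A : Matrix (Fin m) (Fin n) ℝ) : ℝ :=
  schattenTE q n A

/-- Truncated Schatten-q norm for a real exponent q. -/
noncomputable def schattenTR {m n : ℕ} (q : ℝ) (r : ℕ) (A : Matrix (Fin m) (Fin n) ℝ) : ℝ :=
  (∑ i ∈ Finset.range r, sval A i ^ q) ^ (1 / q)

/-- Schatten-q norm for a real exponent q. -/
noncomputable def schattenR {m n : ℕ} (q : ℝ) (A : Matrix (Fin m) (Fin n) ℝ) : ℝ :=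
  schattenTR q n A

/-- `Ahat` is a best rank-`r` approximation of `B` (in Frobenius norm). -/
def IsBestRankApprox {m n : ℕ} (r : ℕ) (B Ahat : Matrix (Fin m) (Fin n) ℝ) : Prop :=
  Ahat.rank ≤ r ∧ ∀ M : Matrix (Fin m) (Fin n) ℝ, M.rank ≤ r →
    schattenR 2 (B - Ahat) ≤ schattenR 2 (B - M)

lemma eig_diag_mem {N : ℕ} {d : Fin N → ℝ} {G : Matrix (Fin N) (Fin N) ℝ}
    (hGd : G = diagonal d) (hG : G.IsHermitian) (i : Fin N) :
    ∃ j, hG.eigenvalues i = d j := by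
  subst hGd
  have hv := hG.mulVec_eigenvectorBasis i
  set v : Fin N → ℝ := (WithLp.equiv 2 _) (hG.eigenvectorBasis i) with hvdef
  have hv0 : v ≠ 0 := by
    intro h0
    have hb : hG.eigenvectorBasis i = 0 := by
      apply (WithLp.equiv 2 _).injective
      show v = _
      rw [h0]
      rfl
    have := hG.eigenvectorBasis.orthonormal.1 i
    rw [hb] at this
    simp at this
  obtain ⟨j, hj⟩ := Function.ne_iff.mp hv0
  simp only [Pi.zero_apply] at hj
  refine ⟨j, ?_⟩
  have h2 := congrFun hv j
  rw [mulVec_diagonal] at h2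
  have h3 : d j * v j = hG.eigenvalues i * v j := h2
  exact (mul_right_cancel₀ hj h3).symm


lemma sum_eig_eq_trace {N : ℕ} {G : Matrix (Fin N) (Fin N) ℝ} (hG : G.IsHermitian) :
    ∑ i, hG.eigenvalues i = G.trace := by
  have h2 := hG.trace_eq_sum_eigenvalues
  simpa using h2.symm


lemma monotone_two_val {n r : ℕ} (hrn : r ≤ n) {g : Fin n → ℝ} {a b : ℝ} (hab : a < b)
    (mono : Monotone g) (mem : ∀ i, g i = a ∨ g i = b)
    (hcard : (Finset.univ.filter (fun i => g i = b)).card = n - r) (i : Fin n) :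
    g i = if (i : ℕ) < r then a else b := by
  classical
  by_cases hi : (i : ℕ) < r
  · rw [if_pos hi]
    rcases mem i with h | h
    · exact h
    · exfalso
      have hsub : Finset.Ici i ⊆ Finset.univ.filter (fun j => g j = b) := by
        intro j hj
        simp only [Finset.mem_Ici] at hj
        simp only [Finset.mem_filter, Finset.mem_univ, true_and]
        rcases mem j with h' | h'
        · have := mono hj
          rw [h, h'] at this; linarith
        · exact h'
      have hc := Finset.card_le_card hsub
      rw [hcard, Fin.card_Ici] at hc
      have := i.isLt
      omega
  · rw [if_neg hi]
    rcases mem i with h | h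
    · exfalso
      have hsub : Finset.univ.filter (fun j => g j = b) ⊆ Finset.Ioi i := by
        intro j hj
        simp only [Finset.mem_filter, Finset.mem_univ, true_and] at hj
        simp only [Finset.mem_Ioi]
        by_contra hji
        push_neg at hji
        have := mono hji
        rw [hj, h] at this; linarith
      have hc := Finset.card_le_card hsub
      rw [hcard, Fin.card_Ioi] at hc
      have := i.isLt
      omega
    · exact h


lemma sum_split {n r : ℕ} (hrn : r ≤ n) (f : ℕ → ℝ) (a b : ℝ)
    (ha : ∀ i < r, f i = a) (hb : ∀ i, r ≤ i → i < n → f i = b) :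
    ∑ i ∈ Finset.range n, f i = r * a + ((n - r : ℕ) : ℝ) * b := by
  rw [Finset.range_eq_Ico, ← Finset.sum_Ico_consecutive f (Nat.zero_le r) hrn]
  rw [← Finset.range_eq_Ico]
  rw [Finset.sum_congr rfl (fun i hi => ha i (Finset.mem_range.mp hi)),
      Finset.sum_congr rfl (fun i hi => hb i (Finset.mem_Ico.mp hi).1 (Finset.mem_Ico.mp hi).2)]
  simp [Finset.sum_const, Nat.card_Ico, mul_comm]


lemma eig_sort_diag_two {r : ℕ} (hr : 1 ≤ r) {G : Matrix (Fin (2*r)) (Fin (2*r)) ℝ}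
    (hG : G.IsHermitian)
    (hGd : G = Matrix.diagonal (fun i : Fin (2*r) => if (i : ℕ) < r then (4:ℝ) else 1))
    (j : Fin (2*r)) :
    hG.eigenvalues (Tuple.sort hG.eigenvalues j) = if (j : ℕ) < r then (1:ℝ) else 4 := by
  classical
  set g : Fin (2*r) → ℝ := hG.eigenvalues ∘ (Tuple.sort hG.eigenvalues) with hg
  have mono : Monotone g := Tuple.monotone_sort _
  have mem : ∀ j, g j = 1 ∨ g j = 4 := by
    intro j
    obtain ⟨k, hk⟩ := eig_diag_mem hGd hG (Tuple.sort hG.eigenvalues j)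
    by_cases h : (k : ℕ) < r
    · right; rw [hg]; simp only [Function.comp_apply, hk]; simp [h]
    · left; rw [hg]; simp only [Function.comp_apply, hk]; simp [h]
  have hsum : ∑ j, g j = 5 * r := by
    have h1 : ∑ j, g j = ∑ i, hG.eigenvalues i :=
      Equiv.sum_comp (Tuple.sort hG.eigenvalues) hG.eigenvalues
    rw [h1, sum_eig_eq_trace hG, hGd, Matrix.trace_diagonal]
    have h2 : ∑ i : Fin (2*r), (if (i : ℕ) < r then (4:ℝ) else 1)
        = ∑ i ∈ Finset.range (2*r), (if i < r then (4:ℝ) else 1) :=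
      Fin.sum_univ_eq_sum_range (fun i => if i < r then (4:ℝ) else 1) (2*r)
    rw [h2, sum_split (by omega) _ 4 1 (fun i hi => if_pos hi) (fun i hi _ => if_neg (by omega))]
    have : (2*r - r : ℕ) = r := by omega
    rw [this]; push_cast; ring
  have hcard : (Finset.univ.filter (fun j => g j = 4)).card = 2*r - r := by
    have hsplit := Finset.sum_filter_add_sum_filter_not Finset.univ (fun j => g j = (4:ℝ)) g
    have hS : ∑ j ∈ Finset.univ.filter (fun j => g j = (4:ℝ)), g j
        = ((Finset.univ.filter (fun j => g j = (4:ℝ))).card : ℝ) * 4 := by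
      rw [Finset.sum_congr rfl (fun j hj => (Finset.mem_filter.mp hj).2)]
      simp [mul_comm]
    have hT : ∑ j ∈ Finset.univ.filter (fun j => ¬ g j = (4:ℝ)), g j
        = ((Finset.univ.filter (fun j => ¬ g j = (4:ℝ))).card : ℝ) := by
      rw [Finset.sum_congr rfl (fun j hj =>
        show g j = 1 from (mem j).resolve_right (Finset.mem_filter.mp hj).2)]
      simp
    have hST : (Finset.univ.filter (fun j => g j = (4:ℝ))).card
        + (Finset.univ.filter (fun j => ¬ g j = (4:ℝ))).card = 2*r := by
      rw [Finset.card_filter_add_card_filter_not]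
      simp
    rw [hS, hT, hsum] at hsplit
    have : ((Finset.univ.filter (fun j => g j = (4:ℝ))).card : ℝ) = r := by
      have hcast : ((Finset.univ.filter (fun j => g j = (4:ℝ))).card : ℝ)
          + ((Finset.univ.filter (fun j => ¬ g j = (4:ℝ))).card : ℝ) = 2*r := by
        exact_mod_cast congrArg (Nat.cast : ℕ → ℝ) hST
      push_cast at hcast ⊢
      linarith
    have h4 : (Finset.univ.filter (fun j => g j = (4:ℝ))).card = r := by exact_mod_cast this
    omega
  exact monotone_two_val (by omega) (by norm_num) mono mem hcard j


lemma sval_nonneg {m n : ℕ} (X : Matrix (Fin m) (Fin n) ℝ) (i : ℕ) : 0 ≤ sval X i := by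
  unfold sval
  split
  · exact Real.sqrt_nonneg _
  · exact le_refl 0


lemma sum_sval_sq {m n : ℕ} (X : Matrix (Fin m) (Fin n) ℝ) :
    ∑ i ∈ Finset.range n, sval X i ^ (2:ℝ) = Matrix.trace (Xᵀ * X) := by
  have hherm : (Xᵀ * X).IsHermitian := by simpa using Matrix.isHermitian_conjTranspose_mul_self X
  have hpsd : (Xᴴ * X).PosSemidef := Matrix.posSemidef_conjTranspose_mul_self X
  rw [← Fin.sum_univ_eq_sum_range (fun i => sval X i ^ (2:ℝ)) n]
  have hterm : ∀ j : Fin n, sval X (j : ℕ) ^ (2:ℝ)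
      = hherm.eigenvalues (Tuple.sort hherm.eigenvalues (Fin.rev j)) := by
    intro j
    have hj : (j : ℕ) < n := j.isLt
    unfold sval
    rw [dif_pos hj]
    have hidx : (⟨n - 1 - (j : ℕ), by omega⟩ : Fin n) = Fin.rev j := by
      apply Fin.ext
      rw [Fin.val_rev]
      show n - 1 - (j : ℕ) = n - ((j : ℕ) + 1)
      omega
    rw [hidx]
    rw [show (2:ℝ) = ((2:ℕ):ℝ) by norm_num, Real.rpow_natCast]
    exact Real.sq_sqrt (hpsd.eigenvalues_nonneg _)
  rw [Finset.sum_congr rfl (fun j _ => hterm j)]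
  rw [show (fun j : Fin n => hherm.eigenvalues (Tuple.sort hherm.eigenvalues (Fin.rev j)))
      = (fun j => (hherm.eigenvalues ∘ Tuple.sort hherm.eigenvalues) (Fin.revPerm j)) from rfl]
  rw [Equiv.sum_comp Fin.revPerm (hherm.eigenvalues ∘ Tuple.sort hherm.eigenvalues)]
  simp only [Function.comp_apply]
  rw [Equiv.sum_comp (Tuple.sort hherm.eigenvalues) hherm.eigenvalues]
  rw [sum_eig_eq_trace hherm]


lemma schattenR_two_eq {m n : ℕ} (X : Matrix (Fin m) (Fin n) ℝ) :
    schattenR 2 X = (Matrix.trace (Xᵀ * X)) ^ ((1:ℝ)/2) := by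
  unfold schattenR schattenTR
  rw [sum_sval_sq]


lemma trace_transpose_mul_self_nonneg {n m : ℕ} (W : Matrix (Fin n) (Fin m) ℝ) :
    0 ≤ Matrix.trace (Wᵀ * W) := by
  rw [Matrix.trace]
  apply Finset.sum_nonneg
  intro j _
  rw [Matrix.diag_apply, Matrix.mul_apply]
  apply Finset.sum_nonneg
  intro i _
  exact mul_self_nonneg _


lemma alg_ineq {n r : ℕ} (N : Matrix (Fin n) (Fin n) ℝ) (V : Matrix (Fin n) (Fin r) ℝ)
    (hVV : Vᵀ * V = 1) (hNV : N * V = V) :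
    (r : ℝ) ≤ Matrix.trace (Nᵀ * N) := by
  set P : Matrix (Fin n) (Fin n) ℝ := V * Vᵀ with hP
  have hPP : P * P = P := by
    rw [hP, Matrix.mul_assoc V Vᵀ (V * Vᵀ), ← Matrix.mul_assoc Vᵀ V Vᵀ, hVV, Matrix.one_mul]
  have hPsymm : Pᵀ = P := by
    rw [hP, Matrix.transpose_mul, Matrix.transpose_transpose]
  have hTT : (1 - P) * (1 - P) = 1 - P := by
    have h2 : (1 - P) * (1 - P) = 1 - P - (P - P * P) := by noncomm_ring
    rw [h2, hPP, sub_self, sub_zero]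
  have hterm1 : Matrix.trace (Nᵀ * N * P) = (r : ℝ) := by
    have e1 : Nᵀ * N * P = Nᵀ * V * Vᵀ := by
      rw [hP, Matrix.mul_assoc Nᵀ N (V * Vᵀ), ← Matrix.mul_assoc N V Vᵀ, hNV,
        Matrix.mul_assoc Nᵀ V Vᵀ]
    rw [e1, Matrix.trace_mul_comm (Nᵀ * V) Vᵀ, ← Matrix.mul_assoc Vᵀ Nᵀ V,
      ← Matrix.transpose_mul, hNV, hVV, Matrix.trace_one]
    simp
  have hterm2 : 0 ≤ Matrix.trace (Nᵀ * N * (1 - P)) := by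
    have e3 : Matrix.trace ((N * (1 - P))ᵀ * (N * (1 - P))) = Matrix.trace (Nᵀ * N * (1 - P)) := by
      rw [Matrix.transpose_mul]
      have hsymm1 : (1 - P)ᵀ = 1 - P := by rw [Matrix.transpose_sub, Matrix.transpose_one, hPsymm]
      rw [hsymm1]
      rw [show (1 - P) * Nᵀ * (N * (1 - P)) = (1 - P) * (Nᵀ * N * (1 - P)) by
        rw [Matrix.mul_assoc (1 - P) Nᵀ (N * (1 - P)), ← Matrix.mul_assoc Nᵀ N (1 - P)]]
      rw [Matrix.trace_mul_comm (1 - P) (Nᵀ * N * (1 - P))]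
      rw [Matrix.mul_assoc (Nᵀ * N) (1 - P) (1 - P), hTT]
    rw [← e3]
    exact trace_transpose_mul_self_nonneg _
  have hsum : Nᵀ * N * P + Nᵀ * N * (1 - P) = Nᵀ * N := by
    rw [← mul_add]
    simp
  have htr : Matrix.trace (Nᵀ * N) = Matrix.trace (Nᵀ * N * P) + Matrix.trace (Nᵀ * N * (1 - P)) := by
    rw [← Matrix.trace_add, hsum]
  rw [htr, hterm1]
  linarith


lemma key_trace {n r : ℕ} (M : Matrix (Fin n) (Fin n) ℝ) (h : M.rank + r ≤ n) :
    (r : ℝ) ≤ Matrix.trace ((1 - M)ᵀ * (1 - M)) := by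
  classical
  set f : EuclideanSpace ℝ (Fin n) →ₗ[ℝ] EuclideanSpace ℝ (Fin n) := Matrix.toEuclideanLin M with hf
  have hrank : M.rank = Module.finrank ℝ (LinearMap.range f) := by
    rw [hf, Matrix.toEuclideanLin_eq_toLin]
    exact Matrix.rank_eq_finrank_range_toLin M (PiLp.basisFun 2 ℝ (Fin n)) (PiLp.basisFun 2 ℝ (Fin n))
  have hrn : Module.finrank ℝ (LinearMap.range f) + Module.finrank ℝ (LinearMap.ker f)
      = n := by
    rw [LinearMap.finrank_range_add_finrank_ker f, finrank_euclideanSpace, Fintype.card_fin]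
  have hker : r ≤ Module.finrank ℝ (LinearMap.ker f) := by omega
  set K := LinearMap.ker f with hK
  let b : OrthonormalBasis (Fin (Module.finrank ℝ K)) ℝ K := stdOrthonormalBasis ℝ K
  let v : Fin r → EuclideanSpace ℝ (Fin n) := fun j => (b (Fin.castLE hker j) : EuclideanSpace ℝ (Fin n))
  have hinner : ∀ j k : Fin r, (inner ℝ (v j) (v k) : ℝ) = if j = k then 1 else 0 := by
    intro j k
    have hb := orthonormal_iff_ite.mp b.orthonormal (Fin.castLE hker j) (Fin.castLE hker k)
    rw [Submodule.coe_inner] at hb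
    rw [show (v j) = ↑(b (Fin.castLE hker j)) from rfl, show (v k) = ↑(b (Fin.castLE hker k)) from rfl]
    rw [hb]
    congr 1
    simp [Fin.castLE_injective hker |>.eq_iff]
  let V : Matrix (Fin n) (Fin r) ℝ := fun i j => v j i
  have hVV : Vᵀ * V = 1 := by
    ext j k
    rw [Matrix.mul_apply, Matrix.one_apply]
    have := hinner j k
    rw [PiLp.inner_apply] at this
    simp only [RCLike.inner_apply, starRingEnd_apply, star_trivial] at this
    rw [← this]
    exact Finset.sum_congr rfl (fun x _ => mul_comm _ _)
  have hMV : M * V = 0 := by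
    ext i j
    rw [Matrix.mul_apply]
    have hmem : (v j : EuclideanSpace ℝ (Fin n)) ∈ K := (b (Fin.castLE hker j)).2
    have hzero : f (v j) = 0 := LinearMap.mem_ker.mp hmem
    rw [hf, Matrix.toEuclideanLin_apply] at hzero
    have hmv : M *ᵥ (WithLp.equiv 2 (Fin n → ℝ)) (v j) = 0 := by
      have := congrArg (WithLp.equiv 2 (Fin n → ℝ)) hzero
      simpa using this
    have h0 := congrFun hmv i
    simp only [Matrix.mulVec, dotProduct, Pi.zero_apply] at h0
    rw [Matrix.zero_apply]
    exact h0
  exact alg_ineq (1 - M) V hVV (by rw [Matrix.sub_mul, Matrix.one_mul, hMV, sub_zero])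


lemma card_lt_subtype (r n : ℕ) (hrn : r ≤ n) :
    Fintype.card {i : Fin n // (i : ℕ) < r} = r := by
  rw [Fintype.card_congr (⟨fun x => (⟨x.1.1, x.2⟩ : Fin r),
    fun y => ⟨⟨y.1, by omega⟩, y.2⟩,
    fun x => Subtype.ext (Fin.ext rfl), fun y => Fin.ext rfl⟩ :
    {i : Fin n // (i : ℕ) < r} ≃ Fin r)]
  exact Fintype.card_fin r

/-- sharpness of the constant `(2^q+1)^{1/q}`. -/
theorem truncatedSVD_error_lower_bound (ε : ℝ) (hε : 0 < ε) (q : ℝ) (hq : 1 ≤ q)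
    (r : ℕ) (hr : 1 ≤ r) :
    ∃ (m n : ℕ) (A Z Ahat : Matrix (Fin m) (Fin n) ℝ),
      Z ≠ 0 ∧ A.rank = r ∧ IsBestRankApprox r (A + Z) Ahat ∧
      ((2 ^ q + 1) ^ (1 / q) - ε) * schattenTR q r Z < schattenR q (Ahat - A) := by
  classical
  set a : Fin (2*r) → ℝ := fun i => if (i : ℕ) < r then 2 else 0 with ha
  set z : Fin (2*r) → ℝ := fun i => if (i : ℕ) < r then -1 else 1 with hz
  set w : Fin (2*r) → ℝ := fun i => if (i : ℕ) < r then 0 else 1 with hw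
  refine ⟨2*r, 2*r, Matrix.diagonal a, Matrix.diagonal z, Matrix.diagonal w, ?_, ?_, ?_, ?_⟩
  · intro h0
    have h1 := congrFun (congrFun h0 ⟨0, by omega⟩) ⟨0, by omega⟩
    rw [Matrix.diagonal_apply_eq, Matrix.zero_apply] at h1
    have h0r : (0 : ℕ) < r := hr
    rw [hz] at h1
    simp only [h0r, if_pos] at h1
    norm_num at h1
  · rw [Matrix.rank_diagonal]
    have he : ∀ i : Fin (2*r), a i ≠ 0 ↔ (i : ℕ) < r := by
      intro i; rw [ha]; by_cases h : (i : ℕ) < r <;> simp [h]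
    rw [Fintype.card_congr (Equiv.subtypeEquivRight he)]
    exact card_lt_subtype r (2*r) (by omega)
  · have hB : Matrix.diagonal a + Matrix.diagonal z = 1 := by
      rw [Matrix.diagonal_add]
      rw [show (fun i => a i + z i) = fun _ : Fin (2*r) => (1:ℝ) from funext fun i => by
        rw [ha, hz]; by_cases h : (i : ℕ) < r <;> norm_num [h]]
      exact Matrix.diagonal_one
    refine ⟨?_, ?_⟩
    · rw [Matrix.rank_diagonal]
      have he : ∀ i : Fin (2*r), w i ≠ 0 ↔ ¬ ((i : ℕ) < r) := by
        intro i; rw [hw]; by_cases h : (i : ℕ) < r <;> simp [h]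
      rw [Fintype.card_congr (Equiv.subtypeEquivRight he)]
      rw [Fintype.card_subtype_compl]
      rw [card_lt_subtype r (2*r) (by omega), Fintype.card_fin]
      omega
    · intro M hM
      rw [hB]
      have hDw : (1 : Matrix (Fin (2*r)) (Fin (2*r)) ℝ) - Matrix.diagonal w
          = Matrix.diagonal (fun i => 1 - w i) := by
        rw [← Matrix.diagonal_one, Matrix.diagonal_sub]
      have htr1 : Matrix.trace ((1 - Matrix.diagonal w)ᵀ * (1 - Matrix.diagonal w)) = (r : ℝ) := by
        rw [hDw, Matrix.diagonal_transpose, Matrix.diagonal_mul_diagonal, Matrix.trace_diagonal]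
        have hterm : ∀ i : Fin (2*r), (1 - w i) * (1 - w i) = if (i : ℕ) < r then (1:ℝ) else 0 := by
          intro i; rw [hw]; by_cases h : (i : ℕ) < r <;> simp [h]
        rw [Finset.sum_congr rfl (fun i _ => hterm i)]
        rw [Fin.sum_univ_eq_sum_range (fun k => if k < r then (1:ℝ) else 0) (2*r)]
        rw [sum_split (by omega) _ 1 0 (fun i hi => if_pos hi) (fun i h1 _ => if_neg (by omega))]
        simp
      rw [schattenR_two_eq, schattenR_two_eq, htr1]
      exact Real.rpow_le_rpow (by positivity) (key_trace M (by omega)) (by norm_num)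
  · have hZZ : (Matrix.diagonal z)ᴴ * Matrix.diagonal z
        = Matrix.diagonal (fun _ : Fin (2*r) => (1:ℝ)) := by
      rw [Matrix.conjTranspose_eq_transpose_of_trivial, Matrix.diagonal_transpose,
        Matrix.diagonal_mul_diagonal]
      exact congrArg Matrix.diagonal (funext fun i => by
        rw [hz]; by_cases h : (i : ℕ) < r <;> norm_num [h])
    have hsvalZ : ∀ i, i < r → sval (Matrix.diagonal z) i = 1 := by
      intro i hi
      unfold sval
      rw [dif_pos (show i < 2*r by omega)]
      obtain ⟨j, hj⟩ := eig_diag_mem hZZ (Matrix.isHermitian_conjTranspose_mul_self _)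
        (Tuple.sort (show ((Matrix.diagonal z)ᵀ * Matrix.diagonal z).IsHermitian by simpa using Matrix.isHermitian_conjTranspose_mul_self (Matrix.diagonal z)).eigenvalues
          ⟨2*r - 1 - i, by omega⟩)
      exact (congrArg Real.sqrt hj).trans Real.sqrt_one
    have hTRZ : schattenTR q r (Matrix.diagonal z) = (r : ℝ) ^ (1/q) := by
      unfold schattenTR
      rw [Finset.sum_congr rfl (fun i hi => by
        rw [hsvalZ i (Finset.mem_range.mp hi), Real.one_rpow])]
      rw [Finset.sum_const, Finset.card_range, nsmul_eq_mul, mul_one]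
    set Nm := Matrix.diagonal w - Matrix.diagonal a with hNm
    have hNd : Nm = Matrix.diagonal (fun i : Fin (2*r) => if (i : ℕ) < r then (-2:ℝ) else 1) := by
      rw [hNm, Matrix.diagonal_sub]
      exact congrArg Matrix.diagonal (funext fun i => by
        rw [hw, ha]; by_cases h : (i : ℕ) < r <;> norm_num [h])
    have hGram : Nmᴴ * Nm = Matrix.diagonal (fun i : Fin (2*r) => if (i : ℕ) < r then (4:ℝ) else 1) := by
      rw [Matrix.conjTranspose_eq_transpose_of_trivial, hNd, Matrix.diagonal_transpose,
        Matrix.diagonal_mul_diagonal]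
      exact congrArg Matrix.diagonal (funext fun i => by
        by_cases h : (i : ℕ) < r <;> norm_num [h])
    have hsort := eig_sort_diag_two hr (show (Nmᵀ * Nm).IsHermitian by simpa using Matrix.isHermitian_conjTranspose_mul_self Nm) hGram
    have hsvalN : ∀ i, i < 2*r → sval Nm i = if i < r then (2:ℝ) else 1 := by
      intro i hi
      unfold sval
      rw [dif_pos hi]
      rw [hsort ⟨2*r - 1 - i, by omega⟩]
      by_cases h : i < r
      · rw [if_pos h, if_neg (show ¬ ((⟨2*r - 1 - i, by omega⟩ : Fin (2*r)) : ℕ) < r from by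
          show ¬ (2*r - 1 - i < r); omega)]
        rw [show (4:ℝ) = 2^2 by norm_num, Real.sqrt_sq (by norm_num)]
      · rw [if_neg h, if_pos (show ((⟨2*r - 1 - i, by omega⟩ : Fin (2*r)) : ℕ) < r from by
          show 2*r - 1 - i < r; omega), Real.sqrt_one]
    have hRN : schattenR q Nm = (r : ℝ) ^ (1/q) * ((2:ℝ)^q + 1) ^ (1/q) := by
      unfold schattenR schattenTR
      rw [sum_split (show r ≤ 2*r by omega) _ ((2:ℝ)^q) 1
        (fun i hi => by rw [hsvalN i (by omega), if_pos hi])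
        (fun i h1 h2 => by rw [hsvalN i h2, if_neg (by omega), Real.one_rpow])]
      rw [show (2*r - r : ℕ) = r from by omega]
      rw [show (r:ℝ) * (2:ℝ)^q + (r:ℝ) * 1 = (r:ℝ) * ((2:ℝ)^q + 1) from by ring]
      rw [Real.mul_rpow (by positivity) (by positivity)]
    rw [hTRZ, hRN]
    have hrpos : 0 < (r : ℝ) ^ (1/q) :=
      Real.rpow_pos_of_pos (by exact_mod_cast Nat.pos_of_ne_zero (by omega)) _
    nlinarith [mul_pos hε hrpos]
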